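/- Let f : [a,b] → ℝ be convex, x ∈ [a,b]^n, and α, β, γ ∈ ℝ^n nonnegative weight tuples each summing to 1 with βᵢ + γᵢ > 0 for all i. Then J(f,x,α) ≤ 2 · max_{1≤i≤n} (αᵢ/(βᵢ+γᵢ)) · J(f, x, (β+γ)/2). -/

import Mathlib

/-!
Put `c := 2 · maxᵢ αᵢ/(βᵢ+γᵢ)` and `w := (β+γ)/2`, so that `α ≤ c • w` pointwise and hence `c ≥ 1`.
Then `∑ wᵢ xᵢ` is the convex combination of the point `∑ αᵢ xᵢ` (weight `1/c`) and the points
`xᵢ` (weights `wᵢ - αᵢ/c ≥ 0`); Jensen's inequality for this combination, multiplied by `c`, is exactly `J(f,x,α) ≤ c · J(f,x,w)`.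
-/

open Finset

variable {ι E : Type*} [Fintype ι] [AddCommGroup E] [Module ℝ E]

noncomputable def jensenGap (f : E → ℝ) (x : ι → E) (w : ι → ℝ) : ℝ :=
  ∑ i, w i * f (x i) - f (∑ i, w i • x i)

theorem ConvexOn.map_smul_add_sum_le {s : Set E} {f : E → ℝ} (hf : ConvexOn ℝ s f)
    {p : E} (hp : p ∈ s) {x : ι → E} (hx : ∀ i, x i ∈ s) {t : ℝ} {u : ι → ℝ}
    (ht : 0 ≤ t) (hu : ∀ i, 0 ≤ u i) (hsum : t + ∑ i, u i = 1) :
    f (t • p + ∑ i, u i • x i) ≤ t * f p + ∑ i, u i * f (x i) := by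
  simpa only [Fintype.sum_option, Option.elim, smul_eq_mul] using
    hf.map_sum_le (t := univ) (w := fun o : Option ι => o.elim t u) (p := fun o : Option ι => o.elim p x)
      (by rintro (_ | i) -; exacts [ht, hu i]) (by simpa only [Fintype.sum_option])
      (by rintro (_ | i) -; exacts [hp, hx i])

theorem ConvexOn.jensenGap_le_mul {s : Set E} {f : E → ℝ} (hf : ConvexOn ℝ s f)
    {x : ι → E} (hx : ∀ i, x i ∈ s) {v w : ι → ℝ} (hv : ∀ i, 0 ≤ v i) (hvs : ∑ i, v i = 1)
    (hws : ∑ i, w i = 1) {c : ℝ} (hvw : ∀ i, v i ≤ c * w i) :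
    jensenGap f x v ≤ c * jensenGap f x w := by
  have hc : 1 ≤ c := calc
    1 = ∑ i, v i := hvs.symm
    _ ≤ ∑ i, c * w i := sum_le_sum fun i _ => hvw i
    _ = c := by rw [← mul_sum, hws, mul_one]
  have hc₀ : 0 < c := by linarith
  have hp : ∑ i, v i • x i ∈ s :=
    hf.1.sum_mem (fun i _ => hv i) hvs fun i _ => hx i
  have hbary : c⁻¹ • ∑ i, v i • x i + ∑ i, (w i - c⁻¹ * v i) • x i = ∑ i, w i • x i := by
    simp only [smul_sum, smul_smul, sub_smul, sum_sub_distrib]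
    abel
  have hjensen := hf.map_smul_add_sum_le hp hx (inv_nonneg.2 hc₀.le)
    (u := fun i => w i - c⁻¹ * v i)
    (fun i => by rw [sub_nonneg, inv_mul_le_iff₀ hc₀]; exact hvw i)
    (by rw [sum_sub_distrib, ← mul_sum, hvs, hws]; ring)
  rw [hbary] at hjensen
  have hexpand : ∑ i, (w i - c⁻¹ * v i) * f (x i)
      = ∑ i, w i * f (x i) - c⁻¹ * ∑ i, v i * f (x i) := by
    simp only [sub_mul, sum_sub_distrib, mul_sum, mul_assoc]
  rw [hexpand] at hjensen
  unfold jensenGap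
  have := mul_le_mul_of_nonneg_left hjensen hc₀.le
  field_simp at this ⊢
  linarith

theorem stmt3_general {a b : ℝ} (f : ℝ → ℝ) (hf : ConvexOn ℝ (Set.Icc a b) f)
    {n : ℕ} (hn : 0 < n) (x : Fin n → ℝ) (hx : ∀ i, x i ∈ Set.Icc a b)
    (α β γ : Fin n → ℝ)
    (hα : ∀ i, 0 ≤ α i)
    (hαs : ∑ i, α i = 1) (hβs : ∑ i, β i = 1) (hγs : ∑ i, γ i = 1)
    (hβγ : ∀ i, 0 < β i + γ i) :
    ∑ i, α i * f (x i) - f (∑ i, α i * x i) ≤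
    2 * (Finset.univ.sup' ⟨⟨0, hn⟩, Finset.mem_univ _⟩ (fun i => α i / (β i + γ i))) *
      (∑ i, (β i + γ i) / 2 * f (x i) - f (∑ i, (β i + γ i) / 2 * x i)) := by
  set M := Finset.univ.sup' ⟨⟨0, hn⟩, Finset.mem_univ _⟩ (fun i => α i / (β i + γ i))
  have hαw : ∀ i, α i ≤ 2 * M * ((β i + γ i) / 2) := fun i => by
    have := (div_le_iff₀ (hβγ i)).1 (le_sup' (fun j => α j / (β j + γ j)) (mem_univ i))
    linarith
  have hws : ∑ i, (β i + γ i) / 2 = 1 := by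
    rw [← sum_div, sum_add_distrib, hβs, hγs]; norm_num
  simpa only [jensenGap, smul_eq_mul] using hf.jensenGap_le_mul hx hα hαs hws hαw

/-- Upper bound of Theorem 4:
`J(f,x,α) ≤ 2 · max_i (αᵢ/(βᵢ+γᵢ)) · J(f, x, (β+γ)/2)`. -/
theorem stmt3 {a b : ℝ} (f : ℝ → ℝ) (hf : ConvexOn ℝ (Set.Icc a b) f)
    {n : ℕ} (hn : 0 < n) (x : Fin n → ℝ) (hx : ∀ i, x i ∈ Set.Icc a b)
    (α β γ : Fin n → ℝ)
    (hα : ∀ i, 0 ≤ α i) (hβ : ∀ i, 0 ≤ β i) (hγ : ∀ i, 0 ≤ γ i)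
    (hαs : ∑ i, α i = 1) (hβs : ∑ i, β i = 1) (hγs : ∑ i, γ i = 1)
    (hβγ : ∀ i, 0 < β i + γ i) :
    ∑ i, α i * f (x i) - f (∑ i, α i * x i) ≤
    2 * (Finset.univ.sup' ⟨⟨0, hn⟩, Finset.mem_univ _⟩ (fun i => α i / (β i + γ i))) *
      (∑ i, (β i + γ i) / 2 * f (x i) - f (∑ i, (β i + γ i) / 2 * x i)) :=
  stmt3_general f hf hn x hx α β γ hα hαs hβs hγs hβγ
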